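/- Let A be a complex Banach algebra possessing a contractive approximate identity, and let H be a Hilbert A-module. Then H is sub-tracing if and only if Tr_K(H) = K for every closed A-invariant subspace K of H (regarded as a Hilbert A-module under the restricted action). -/

import Mathlib

noncomputable section

open Filter

open scoped ENNReal

/-- A contractive approximate identity for a (possibly non-unital) normed algebra `A`:
a net `(e i)`, indexed by a nontrivial filter, with `‖e i‖ ≤ 1` for all `i`, such that
`e i * a → a` and `a * e i → a` in norm for every `a ∈ A`. -/
def HasCAI (A : Type) [NonUnitalNormedRing A] : Prop :=
  ∃ (ι : Type) (l : Filter ι) (e : ι → A), l.NeBot ∧ (∀ i, ‖e i‖ ≤ 1) ∧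
    ∀ a : A, Tendsto (fun i => e i * a) l (nhds a) ∧ Tendsto (fun i => a * e i) l (nhds a)

variable (A : Type) [NonUnitalNormedRing A] [NormedSpace ℂ A] [IsScalarTower ℂ A A]
  [SMulCommClass ℂ A A]

/-- A Hilbert `A`-module structure on the Hilbert space `K`: a contractive algebra
homomorphism `π : A → B(K)` which is nondegenerate, i.e. the linear span of
`{π a x : a ∈ A, x ∈ K}` is dense in `K`. -/
def IsHilbertRep {K : Type} [NormedAddCommGroup K] [InnerProductSpace ℂ K] [CompleteSpace K]
    (π : A →ₙₐ[ℂ] (K →L[ℂ] K)) : Prop :=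
  (∀ a : A, ‖π a‖ ≤ ‖a‖) ∧
  Dense ((Submodule.span ℂ {x : K | ∃ (a : A) (y : K), π a y = x} : Submodule ℂ K) : Set K)

/-- A bounded `A`-module map between Hilbert `A`-modules. -/
def IsModuleMap {K L : Type} [NormedAddCommGroup K] [InnerProductSpace ℂ K]
    [NormedAddCommGroup L] [InnerProductSpace ℂ L]
    (πK : A →ₙₐ[ℂ] (K →L[ℂ] K)) (πL : A →ₙₐ[ℂ] (L →L[ℂ] L)) (T : K →L[ℂ] L) : Prop :=
  ∀ (a : A) (x : K), T (πK a x) = πL a (T x)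

/-- `H` is sub-tracing: for every closed `A`-invariant subspace `E` of `H` (a Hilbert
`A`-module under the restricted action), every Hilbert `A`-module `L`, and every nonzero
bounded `A`-module map `R : E → L`, there exists a bounded `A`-module map `V : H → E`
with `R ∘ V ≠ 0`. -/
def IsSubTracing {H : Type} [NormedAddCommGroup H] [InnerProductSpace ℂ H] [CompleteSpace H]
    (πH : A →ₙₐ[ℂ] (H →L[ℂ] H)) : Prop :=
  ∀ (E : Submodule ℂ H), IsClosed (E : Set H) →
    ∀ (hinv : ∀ (a : A), ∀ x ∈ E, πH a x ∈ E),
    ∀ (L : Type) [NormedAddCommGroup L] [InnerProductSpace ℂ L] [CompleteSpace L],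
    ∀ (πL : A →ₙₐ[ℂ] (L →L[ℂ] L)), IsHilbertRep A πL →
    ∀ R : ↥E →L[ℂ] L,
      (∀ (a : A) (x : ↥E), R ⟨πH a ↑x, hinv a ↑x x.2⟩ = πL a (R x)) → R ≠ 0 →
      ∃ V : H →L[ℂ] ↥E,
        (∀ (a : A) (x : H), (↑(V (πH a x)) : H) = πH a ↑(V x)) ∧ R.comp V ≠ 0

/-! If the trace of `H` in `E` is not dense, its closure `S` is a proper closed invariant
subspace of `E`, so the compression of the action to `Sᗮ` is again a Hilbert `A`-module: it is
multiplicative because `S` is invariant, and nondegenerate because the contractive approximate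
identity acts on `H` as a strong approximate unit. The orthogonal projection `E → Sᗮ` is then a
nonzero module map that kills the range of every module map `H → E`, contradicting
sub-tracing. Conversely, a module map `R : E → L` with `R ∘ V = 0` for every module map
`V : H → E` vanishes on the trace, hence on its closure `E`. -/

open Topology

namespace Submodule

variable {R M : Type*} [Semiring R] [TopologicalSpace R] [AddCommMonoid M] [Module R M]
  [TopologicalSpace M] [ContinuousAdd M] [ContinuousSMul R M]

theorem topologicalClosure_le_comap_of_le_comap {p : Submodule R M} {f : M →L[R] M}
    (hp : p ≤ p.comap (f : M →ₗ[R] M)) :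
    p.topologicalClosure ≤ p.topologicalClosure.comap (f : M →ₗ[R] M) :=
  map_le_iff_le_comap.mp <|
    (p.topologicalClosure_map f).trans (topologicalClosure_mono (map_le_iff_le_comap.mpr hp))

end Submodule

section Representations

variable {A : Type} [NonUnitalNormedRing A] [NormedSpace ℂ A]

theorem isHilbertRep_of_tendsto {H : Type} [NormedAddCommGroup H] [InnerProductSpace ℂ H]
    [CompleteSpace H] {π : A →ₙₐ[ℂ] (H →L[ℂ] H)} (hπ : ∀ a, ‖π a‖ ≤ ‖a‖)
    {ι : Type} {l : Filter ι} [l.NeBot] {e : ι → A}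
    (he : ∀ x, Tendsto (fun i => π (e i) x) l (𝓝 x)) : IsHilbertRep A π :=
  ⟨hπ, fun x => mem_closure_of_tendsto (he x) <|
    Eventually.of_forall fun i => Submodule.subset_span ⟨e i, x, rfl⟩⟩

theorem IsHilbertRep.continuous {H : Type} [NormedAddCommGroup H] [InnerProductSpace ℂ H]
    [CompleteSpace H] {π : A →ₙₐ[ℂ] (H →L[ℂ] H)} (hπ : IsHilbertRep A π) : Continuous π :=
  AddMonoidHomClass.continuous_of_bound π 1 fun a => by simpa using hπ.1 a

theorem IsHilbertRep.tendsto_apply_of_cai {H : Type} [NormedAddCommGroup H]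
    [InnerProductSpace ℂ H] [CompleteSpace H] {π : A →ₙₐ[ℂ] (H →L[ℂ] H)} (hπ : IsHilbertRep A π)
    {ι : Type} {l : Filter ι} {e : ι → A} (he_norm : ∀ i, ‖e i‖ ≤ 1)
    (he_mul : ∀ a, Tendsto (fun i => e i * a) l (𝓝 a)) (z : H) :
    Tendsto (fun i => π (e i) z) l (𝓝 z) := by
  have hbounded : ∃ C, ∀ i, ‖π (e i)‖ ≤ C := ⟨1, fun i => (hπ.1 _).trans (he_norm i)⟩
  -- A bounded net of operators converging pointwise on a dense set converges everywhere.
  have hclosed : IsClosed {x : H | Tendsto (fun i => π (e i) x) l (𝓝 x)} :=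
    Equicontinuous.isClosed_setOfPred_tendsto
      (((NormedSpace.equicontinuous_TFAE fun i => π (e i)).out 5 1).mp hbounded) continuous_id
  have hspan : (Submodule.span ℂ {x : H | ∃ (a : A) (y : H), π a y = x} : Set H) ⊆
      {x : H | Tendsto (fun i => π (e i) x) l (𝓝 x)} := by
    intro w hw
    induction hw using Submodule.span_induction with
    | mem x hx =>
      obtain ⟨a, y, rfl⟩ := hx
      have hcont : Continuous fun b : A => π b y :=
        (ContinuousLinearMap.apply ℂ H y).continuous.comp hπ.continuous
      simpa only [Set.mem_ofPred_eq, Function.comp_def, map_mul, mul_apply_eq_comp] using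
        (hcont.tendsto a).comp (he_mul a)
    | zero => simpa using tendsto_const_nhds
    | add x y _ _ hx hy => simpa only [Set.mem_ofPred_eq, map_add] using hx.add hy
    | smul c x _ hx => simpa only [Set.mem_ofPred_eq, map_smul] using hx.const_smul c
  exact hclosed.closure_subset_iff.mpr hspan (hπ.2 z)

section Restriction

variable {H : Type} [NormedAddCommGroup H] [NormedSpace ℂ H]
  (π : A →ₙₐ[ℂ] (H →L[ℂ] H)) (E : Submodule ℂ H) (hE : ∀ a, ∀ x ∈ E, π a x ∈ E)

def restrictRep : A →ₙₐ[ℂ] (E →L[ℂ] E) where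
  toFun a := (π a).restrict (hE a)
  map_smul' c a := by ext; simp
  map_zero' := by ext; simp
  map_add' a b := by ext; simp
  map_mul' a b := by ext; simp

theorem norm_restrictRep_le (a : A) : ‖restrictRep π E hE a‖ ≤ ‖π a‖ :=
  ContinuousLinearMap.opNorm_le_bound _ (norm_nonneg _) fun x => (π a).le_opNorm x

theorem tendsto_restrictRep_apply {ι : Type} {l : Filter ι} {e : ι → A} {x : E}
    (h : Tendsto (fun i => π (e i) x) l (𝓝 x)) :
    Tendsto (fun i => restrictRep π E hE (e i) x) l (𝓝 x) :=
  tendsto_subtype_rng.mpr h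

end Restriction

section Compression

variable {H : Type} [NormedAddCommGroup H] [InnerProductSpace ℂ H]
  (π : A →ₙₐ[ℂ] (H →L[ℂ] H)) (K : Submodule ℂ H) [K.HasOrthogonalProjection]

theorem orthogonalProjectionOnto_apply_eq_of_orthogonal_invariant
    (hK : ∀ a, ∀ x ∈ Kᗮ, π a x ∈ Kᗮ) (a : A) (x : H) :
    K.orthogonalProjectionOnto (π a x) =
      K.orthogonalProjectionOnto (π a (K.orthogonalProjectionOnto x)) := by
  have h : π a (x - K.starProjection x) ∈ Kᗮ := hK a _ (K.sub_starProjection_mem_orthogonal x)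
  rwa [← K.orthogonalProjectionOnto_eq_zero_iff, map_sub, map_sub, sub_eq_zero] at h

variable (hK : ∀ a, ∀ x ∈ Kᗮ, π a x ∈ Kᗮ)

def compressRep : A →ₙₐ[ℂ] (K →L[ℂ] K) where
  toFun a := K.orthogonalProjectionOnto ∘L π a ∘L K.subtypeL
  map_smul' c a := by ext; simp
  map_zero' := by ext; simp
  map_add' a b := by ext; simp
  map_mul' a b := ContinuousLinearMap.ext fun x => by
    simpa only [ContinuousLinearMap.comp_apply, Submodule.subtypeL_apply, map_mul,
      mul_apply_eq_comp] using
      orthogonalProjectionOnto_apply_eq_of_orthogonal_invariant π K hK a (π b x)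

@[simp]
theorem compressRep_apply (a : A) (x : K) :
    compressRep π K hK a x = K.orthogonalProjectionOnto (π a x) := rfl

theorem isModuleMap_orthogonalProjectionOnto :
    IsModuleMap A π (compressRep π K hK) K.orthogonalProjectionOnto :=
  orthogonalProjectionOnto_apply_eq_of_orthogonal_invariant π K hK

theorem norm_compressRep_le (a : A) : ‖compressRep π K hK a‖ ≤ ‖π a‖ :=
  calc ‖K.orthogonalProjectionOnto ∘L π a ∘L K.subtypeL‖
      ≤ ‖K.orthogonalProjectionOnto‖ * (‖π a‖ * ‖K.subtypeL‖) :=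
        (ContinuousLinearMap.opNorm_comp_le _ _).trans <|
          by gcongr; exact ContinuousLinearMap.opNorm_comp_le _ _
    _ ≤ 1 * (‖π a‖ * 1) := by
        gcongr
        exacts [K.orthogonalProjectionOnto_norm_le, K.norm_subtypeL_le]
    _ = ‖π a‖ := by ring

theorem tendsto_compressRep_apply {ι : Type} {l : Filter ι} {e : ι → A} {x : K}
    (h : Tendsto (fun i => π (e i) x) l (𝓝 x)) :
    Tendsto (fun i => compressRep π K hK (e i) x) l (𝓝 x) := by
  simpa [Function.comp_def] using (K.orthogonalProjectionOnto.continuous.tendsto _).comp h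

theorem isHilbertRep_compressRep [CompleteSpace K] (hπ : ∀ a, ‖π a‖ ≤ ‖a‖)
    {ι : Type} {l : Filter ι} [l.NeBot] {e : ι → A}
    (he : ∀ x, Tendsto (fun i => π (e i) x) l (𝓝 x)) :
    IsHilbertRep A (K := K) (compressRep π K hK) :=
  isHilbertRep_of_tendsto (fun a => (norm_compressRep_le π K hK a).trans (hπ a))
    fun x => tendsto_compressRep_apply π K hK (he x)

end Compression

/-- The paper's `Tr_E(H)` is the closure of this span. -/
def moduleTrace {H : Type} [NormedAddCommGroup H] [NormedSpace ℂ H]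
    (πH : A →ₙₐ[ℂ] (H →L[ℂ] H)) (E : Submodule ℂ H) : Submodule ℂ E :=
  Submodule.span ℂ {y : E | ∃ T : H →L[ℂ] E,
    (∀ (a : A) (x : H), (↑(T (πH a x)) : H) = πH a ↑(T x)) ∧ y ∈ Set.range ⇑T}

theorem moduleTrace_le_comap_restrictRep {H : Type} [NormedAddCommGroup H] [NormedSpace ℂ H]
    (πH : A →ₙₐ[ℂ] (H →L[ℂ] H)) (E : Submodule ℂ H) (hE : ∀ a, ∀ x ∈ E, πH a x ∈ E) (a : A) :
    moduleTrace πH E ≤ (moduleTrace πH E).comap (restrictRep πH E hE a : E →ₗ[ℂ] E) := by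
  rw [moduleTrace, Submodule.span_le]
  rintro _ ⟨T, hT, z, rfl⟩
  exact Submodule.subset_span ⟨T, hT, πH a z, Subtype.ext (hT a z)⟩

variable {H : Type} [NormedAddCommGroup H] [InnerProductSpace ℂ H] [CompleteSpace H]
  {πH : A →ₙₐ[ℂ] (H →L[ℂ] H)}

theorem IsSubTracing.topologicalClosure_moduleTrace_eq_top (hst : IsSubTracing A πH)
    (hπ : ∀ a, ‖πH a‖ ≤ ‖a‖) {ι : Type} {l : Filter ι} [l.NeBot] {e : ι → A}
    (he : ∀ x, Tendsto (fun i => πH (e i) x) l (𝓝 x))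
    (E : Submodule ℂ H) (hE : IsClosed (E : Set H)) (hinv : ∀ a, ∀ x ∈ E, πH a x ∈ E) :
    (moduleTrace πH E).topologicalClosure = ⊤ := by
  have : CompleteSpace E := hE.completeSpace_coe
  set S := (moduleTrace πH E).topologicalClosure
  have : CompleteSpace S := (moduleTrace πH E).isClosed_topologicalClosure.completeSpace_coe
  have hSS : Sᗮᗮ = S := S.orthogonal_orthogonal
  have hSinv : ∀ a, ∀ y ∈ Sᗮᗮ, restrictRep πH E hinv a y ∈ Sᗮᗮ := by
    rw [hSS]
    exact fun a => Submodule.topologicalClosure_le_comap_of_le_comap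
      (moduleTrace_le_comap_restrictRep πH E hinv a)
  by_contra hS
  have hP : Sᗮ.orthogonalProjectionOnto ≠ 0 := fun h => hS <| S.eq_top_iff'.mpr fun x => by
    rw [← hSS, ← Sᗮ.orthogonalProjectionOnto_eq_zero_iff, h, zero_apply]
  obtain ⟨V, hV, hPV⟩ := hst E hE hinv Sᗮ _
    (isHilbertRep_compressRep _ Sᗮ hSinv (fun a => (norm_restrictRep_le _ _ _ a).trans (hπ a))
      fun x => tendsto_restrictRep_apply _ _ _ (he x)) _
    (isModuleMap_orthogonalProjectionOnto _ _ hSinv) hP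
  refine hPV (ContinuousLinearMap.ext fun z => ?_)
  rw [ContinuousLinearMap.comp_apply, zero_apply,
    Submodule.orthogonalProjectionOnto_eq_zero_iff, hSS]
  exact Submodule.le_topologicalClosure _ (Submodule.subset_span ⟨V, hV, z, rfl⟩)

theorem isSubTracing_of_topologicalClosure_moduleTrace_eq_top
    (h : ∀ E : Submodule ℂ H, IsClosed (E : Set H) → (∀ a, ∀ x ∈ E, πH a x ∈ E) →
      (moduleTrace πH E).topologicalClosure = ⊤) :
    IsSubTracing A πH := by
  intro E hE hinv L _ _ _ πL _ R _ hR
  by_contra! hV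
  refine hR (ContinuousLinearMap.ext_on
    (Submodule.dense_iff_topologicalClosure_eq_top.mpr (h E hE hinv)) ?_)
  rintro _ ⟨T, hT, z, rfl⟩
  exact DFunLike.congr_fun (hV T hT) z

end Representations

theorem subtracing_iff_trace_eq_top (hA : HasCAI A)
    (H : Type) [NormedAddCommGroup H] [InnerProductSpace ℂ H] [CompleteSpace H]
    (πH : A →ₙₐ[ℂ] (H →L[ℂ] H)) (hrep : IsHilbertRep A πH) :
    IsSubTracing A πH ↔
      ∀ (E : Submodule ℂ H), IsClosed (E : Set H) →
        (∀ (a : A), ∀ x ∈ E, πH a x ∈ E) →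
        (Submodule.span ℂ {y : ↥E | ∃ T : H →L[ℂ] ↥E,
          (∀ (a : A) (x : H), (↑(T (πH a x)) : H) = πH a ↑(T x)) ∧
          y ∈ Set.range ⇑T}).topologicalClosure = ⊤ := by
  obtain ⟨ι, l, e, hl, he_norm, he_mul⟩ := hA
  have he := hrep.tendsto_apply_of_cai he_norm fun a => (he_mul a).1
  exact ⟨fun hst => hst.topologicalClosure_moduleTrace_eq_top hrep.1 he,
    isSubTracing_of_topologicalClosure_moduleTrace_eq_top⟩
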